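/- The evaluation map f ↦ (f(1), f(Π)) is a k-linear bijection from the space of I₁-invariant vectors {f ∈ Ind_P^G χ : f(g·u) = f(g) for all g ∈ G and u ∈ I₁} onto k × k. In particular, the I₁-invariants of the principal series Ind_P^G χ form a 2-dimensional k-vector space. (Stated in §2.1 of the paper.) -/

import Mathlib

open Matrix

/-- membership in `K_n = {g ∈ GL₂(ℤ_p) : g ≡ 1 (mod pⁿ)}`. -/
def InKn (p : ℕ) [Fact p.Prime] (n : ℕ) (u : GL (Fin 2) ℚ_[p]) : Prop :=
  ∀ i j, ‖(u : Matrix (Fin 2) (Fin 2) ℚ_[p]) i j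
            - (1 : Matrix (Fin 2) (Fin 2) ℚ_[p]) i j‖ ≤ (p : ℝ) ^ (-(n : ℤ))

/-- membership in the pro-p Iwahori subgroup `I₁ ≤ K = GL₂(ℤ_p)`:
matrices in `K` which are upper triangular unipotent modulo `p`. -/
def InI1 (p : ℕ) [Fact p.Prime] (u : GL (Fin 2) ℚ_[p]) : Prop :=
  (∀ i j, ‖(u : Matrix (Fin 2) (Fin 2) ℚ_[p]) i j‖ ≤ 1) ∧
  ‖Matrix.det (u : Matrix (Fin 2) (Fin 2) ℚ_[p])‖ = 1 ∧
  ‖(u : Matrix (Fin 2) (Fin 2) ℚ_[p]) 1 0‖ ≤ (p : ℝ)⁻¹ ∧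
  ‖(u : Matrix (Fin 2) (Fin 2) ℚ_[p]) 0 0 - 1‖ ≤ (p : ℝ)⁻¹ ∧
  ‖(u : Matrix (Fin 2) (Fin 2) ℚ_[p]) 1 1 - 1‖ ≤ (p : ℝ)⁻¹

/-- membership in the principal series `Ind_P^G χ`. -/
def IsIndChi (p : ℕ) [Fact p.Prime] {k : Type*} [Field k]
    (χ₁ χ₂ : ℚ_[p]ˣ →* kˣ) (h : GL (Fin 2) ℚ_[p] → k) : Prop :=
  (∀ b g : GL (Fin 2) ℚ_[p],
    (b : Matrix (Fin 2) (Fin 2) ℚ_[p]) 1 0 = 0 →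
    ∀ a d : ℚ_[p]ˣ,
      (b : Matrix (Fin 2) (Fin 2) ℚ_[p]) 0 0 = (a : ℚ_[p]) →
      (b : Matrix (Fin 2) (Fin 2) ℚ_[p]) 1 1 = (d : ℚ_[p]) →
      h (b * g) = (χ₁ a : k) * (χ₂ d : k) * h g) ∧
  (∃ n : ℕ, 1 ≤ n ∧ ∀ g u, InKn p n u → h (g * u) = h g)

/-- the matrix `Π = (0, 1; p, 0)` as an element of `GL₂(ℚ_p)`. -/
noncomputable def PiMat (p : ℕ) [Fact p.Prime] : GL (Fin 2) ℚ_[p] :=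
  Matrix.GeneralLinearGroup.mkOfDetNeZero !![0, 1; (p : ℚ_[p]), 0]
    (by
      simp [Matrix.det_fin_two_of]
      exact_mod_cast (Fact.out : p.Prime).ne_zero)

/-!
`G = P I₁ ∪ P Π I₁`, and the two cosets are told apart by the bottom row `(c, d)` of `g`:
`g ∈ P I₁` iff `|c| < |d|`. Hence an `I₁`-invariant vector of `Ind_P^G χ` is determined by its
values at `1` and `Π`. Conversely, a smooth character of `ℚ_pˣ` with values in a field of
characteristic `p` is trivial on the pro-`p` group `1 + pℤ_p`, which contains the diagonal
entries of `P ∩ I₁`. So `b u ↦ χ(b)` on `P I₁`, extended by zero, is a well-defined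
`I₁`-invariant vector; it and its right translate by `Π⁻¹` take the values `(1, 0)` and
`(0, 1)` at `(1, Π)`.
-/

variable {p : ℕ} [Fact p.Prime]

lemma inv_prime_lt_one : (p : ℝ)⁻¹ < 1 :=
  inv_lt_one_of_one_lt₀ (by exact_mod_cast (Fact.out : p.Prime).one_lt)

lemma Padic.norm_eq_one_of_norm_sub_one_lt_one {x : ℚ_[p]} (hx : ‖x - 1‖ < 1) : ‖x‖ = 1 := by
  simpa using Padic.norm_eq_of_norm_sub_lt_right (z2 := 1) (by simpa using hx)

lemma Padic.norm_le_inv_of_norm_lt_one {x : ℚ_[p]} (h : ‖x‖ < 1) : ‖x‖ ≤ (p : ℝ)⁻¹ := by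
  simpa using (Padic.norm_le_pow_iff_norm_lt_pow_add_one x (-1)).mpr (by simpa using h)

lemma Padic.norm_pow_prime_pow_sub_one_le {x : ℚ_[p]} (hx : ‖x - 1‖ < 1) (N : ℕ) :
    ‖x ^ p ^ N - 1‖ ≤ (p : ℝ) ^ (-(N + 1 : ℕ) : ℤ) := by
  obtain ⟨x, rfl⟩ : ∃ y : ℤ_[p], (y : ℚ_[p]) = x :=
    ⟨⟨x, (Padic.norm_eq_one_of_norm_sub_one_lt_one hx).le⟩, rfl⟩
  have hdvd : (p : ℤ_[p]) ∣ x - 1 := (PadicInt.norm_lt_one_iff_dvd _).mp hx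
  have := dvd_sub_pow_of_dvd_sub hdvd N
  rw [one_pow, ← Ideal.mem_span_singleton, ← PadicInt.norm_le_pow_iff_mem_span_pow] at this
  rwa [PadicInt.norm_def, PadicInt.coe_sub, PadicInt.coe_pow, PadicInt.coe_one] at this

/-! ### Characters trivial on `1 + pℤ_p` -/

def IsTrivialOnPrincipalUnits {M : Type*} [Monoid M] (χ : ℚ_[p]ˣ →* M) : Prop :=
  ∀ u : ℚ_[p]ˣ, ‖(u : ℚ_[p]) - 1‖ < 1 → χ u = 1

lemma isTrivialOnPrincipalUnits_of_forall_norm_sub_one_le {R : Type*} [CommRing R]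
    [IsReduced R] [ExpChar R p] (χ : ℚ_[p]ˣ →* Rˣ) (N : ℕ)
    (hχ : ∀ u : ℚ_[p]ˣ, ‖(u : ℚ_[p]) - 1‖ ≤ (p : ℝ) ^ (-(N : ℤ)) → χ u = 1) :
    IsTrivialOnPrincipalUnits χ := by
  intro u hu
  have hpow : χ (u ^ p ^ N) = 1 := by
    refine hχ _ ((Padic.norm_pow_prime_pow_sub_one_le hu N).trans ?_)
    exact zpow_le_zpow_right₀ (by exact_mod_cast (Fact.out : p.Prime).one_le) (by omega)
  -- `x ↦ x ^ p ^ N` is injective on a reduced ring of characteristic `p`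
  rw [map_pow, ← Units.val_inj, Units.val_pow_eq_pow_val, Units.val_one,
    ← mul_one (p ^ N), ExpChar.pow_prime_pow_mul_eq_one_iff, pow_one] at hpow
  exact Units.val_inj.mp hpow

lemma IsTrivialOnPrincipalUnits.map_eq_of_norm_sub_lt {M : Type*} [CommMonoid M]
    {χ : ℚ_[p]ˣ →* M} (hχ : IsTrivialOnPrincipalUnits χ) {x y : ℚ_[p]ˣ}
    (h : ‖(x : ℚ_[p]) - y‖ < ‖(y : ℚ_[p])‖) : χ x = χ y := by
  have hy : (0 : ℝ) < ‖(y : ℚ_[p])‖ := norm_pos_iff.mpr y.ne_zero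
  have hxy : ‖((x / y : ℚ_[p]ˣ) : ℚ_[p]) - 1‖ < 1 := by
    rwa [Units.val_div_eq_div_val, div_sub_one y.ne_zero, norm_div, div_lt_one hy]
  rw [← div_mul_cancel x y, map_mul, hχ _ hxy, one_mul]

section Matrices

variable {R : Type*} [CommRing R]

lemma Matrix.GeneralLinearGroup.val_mul_apply_fin_two (g h : GL (Fin 2) R) (i j : Fin 2) :
    (g * h).1 i j = g.1 i 0 * h.1 0 j + g.1 i 1 * h.1 1 j := by
  rw [GeneralLinearGroup.coe_mul, mul_apply, Fin.sum_univ_two]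

lemma Matrix.GeneralLinearGroup.val_det_fin_two (g : GL (Fin 2) R) :
    (GeneralLinearGroup.det g : R) = g.1 0 0 * g.1 1 1 - g.1 0 1 * g.1 1 0 :=
  det_fin_two _

def lowerUnipotent (t : R) : GL (Fin 2) R :=
  ⟨!![1, 0; t, 1], !![1, 0; -t, 1], by simp [one_fin_two], by simp [one_fin_two]⟩

def upperUnipotent (t : R) : GL (Fin 2) R :=
  ⟨!![1, t; 0, 1], !![1, -t; 0, 1], by simp [one_fin_two], by simp [one_fin_two]⟩

end Matrices

section Upper

variable {K : Type*} [Field K] {b : GL (Fin 2) K}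

lemma Matrix.GeneralLinearGroup.diag_ne_zero_of_one_zero_eq_zero (hb : b.1 1 0 = 0) :
    b.1 0 0 ≠ 0 ∧ b.1 1 1 ≠ 0 := by
  have hdet := (GeneralLinearGroup.det b).ne_zero
  rwa [GeneralLinearGroup.val_det_fin_two, hb, mul_zero, sub_zero, mul_ne_zero_iff] at hdet

lemma Matrix.GeneralLinearGroup.val_mul_apply_one_of_one_zero_eq_zero (hb : b.1 1 0 = 0)
    (g : GL (Fin 2) K) (j : Fin 2) : (b * g).1 1 j = b.1 1 1 * g.1 1 j := by
  rw [GeneralLinearGroup.val_mul_apply_fin_two, hb, zero_mul, zero_add]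

end Upper

lemma PiMat_val : (PiMat p).1 = !![0, 1; (p : ℚ_[p]), 0] := rfl

lemma PiMat_inv_val : (PiMat p)⁻¹.1 = !![0, (p : ℚ_[p])⁻¹; 1, 0] := by
  have hp : (p : ℚ_[p]) ≠ 0 := by exact_mod_cast (Fact.out : p.Prime).ne_zero
  rw [coe_units_inv, PiMat_val]
  exact inv_eq_right_inv (by simp [one_fin_two, hp])

lemma PiMat_conj_val (u : GL (Fin 2) ℚ_[p]) :
    (PiMat p * u * (PiMat p)⁻¹).1 =
      !![u.1 1 1, u.1 1 0 * (p : ℚ_[p])⁻¹; p * u.1 0 1, u.1 0 0] := by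
  have hp : (p : ℚ_[p]) ≠ 0 := by exact_mod_cast (Fact.out : p.Prime).ne_zero
  rw [GeneralLinearGroup.coe_mul, GeneralLinearGroup.coe_mul, PiMat_val, PiMat_inv_val,
    eta_fin_two u.1]
  simp [mul_right_comm _ _ (p : ℚ_[p])⁻¹, hp]

/-! ### The pro-`p` Iwahori subgroup -/

lemma norm_det_sub_one_lt_one_of_entries {u : GL (Fin 2) ℚ_[p]} (h00 : ‖u.1 0 0 - 1‖ < 1)
    (h11 : ‖u.1 1 1 - 1‖ < 1) (h01 : ‖u.1 0 1‖ ≤ 1) (h10 : ‖u.1 1 0‖ < 1) :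
    ‖(GeneralLinearGroup.det u : ℚ_[p]) - 1‖ < 1 := by
  calc ‖(GeneralLinearGroup.det u : ℚ_[p]) - 1‖
      = ‖(u.1 0 0 - 1) * u.1 1 1 + (u.1 1 1 - 1) + -(u.1 0 1 * u.1 1 0)‖ := by
        rw [GeneralLinearGroup.val_det_fin_two]; ring_nf
    _ ≤ max (max ‖(u.1 0 0 - 1) * u.1 1 1‖ ‖u.1 1 1 - 1‖) ‖-(u.1 0 1 * u.1 1 0)‖ :=
        (IsUltrametricDist.norm_add_le_max _ _).trans
          (max_le_max_right _ (IsUltrametricDist.norm_add_le_max _ _))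
    _ < 1 := by
      refine max_lt (max_lt ?_ h11) ?_
      · rwa [norm_mul, Padic.norm_eq_one_of_norm_sub_one_lt_one h11, mul_one]
      · rw [norm_neg, norm_mul]
        exact (mul_le_of_le_one_left (norm_nonneg _) h01).trans_lt h10

namespace InI1

variable {u : GL (Fin 2) ℚ_[p]}

lemma norm_le_one (hu : InI1 p u) (i j : Fin 2) : ‖u.1 i j‖ ≤ 1 := hu.1 i j

lemma norm_one_zero_lt_one (hu : InI1 p u) : ‖u.1 1 0‖ < 1 :=
  hu.2.2.1.trans_lt inv_prime_lt_one

lemma norm_zero_zero (hu : InI1 p u) : ‖u.1 0 0‖ = 1 :=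
  Padic.norm_eq_one_of_norm_sub_one_lt_one (hu.2.2.2.1.trans_lt inv_prime_lt_one)

lemma norm_one_one_sub_one_lt_one (hu : InI1 p u) : ‖u.1 1 1 - 1‖ < 1 :=
  hu.2.2.2.2.trans_lt inv_prime_lt_one

lemma norm_one_one (hu : InI1 p u) : ‖u.1 1 1‖ = 1 :=
  Padic.norm_eq_one_of_norm_sub_one_lt_one hu.norm_one_one_sub_one_lt_one

lemma norm_det_sub_one_lt_one (hu : InI1 p u) :
    ‖(GeneralLinearGroup.det u : ℚ_[p]) - 1‖ < 1 :=
  norm_det_sub_one_lt_one_of_entries (hu.2.2.2.1.trans_lt inv_prime_lt_one)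
    hu.norm_one_one_sub_one_lt_one (hu.norm_le_one 0 1) hu.norm_one_zero_lt_one

lemma conj_PiMat (hu : InI1 p u) : InI1 p (PiMat p * u * (PiMat p)⁻¹) := by
  have hp : (0 : ℝ) < p := by exact_mod_cast (Fact.out : p.Prime).pos
  have hdet : GeneralLinearGroup.det (PiMat p * u * (PiMat p)⁻¹) = GeneralLinearGroup.det u := by
    rw [map_mul, map_mul, map_inv, mul_inv_cancel_comm]
  have h01 : ‖u.1 1 0 * (p : ℚ_[p])⁻¹‖ ≤ 1 := by
    rw [norm_mul, norm_inv, Padic.norm_p, inv_inv, ← le_div_iff₀ hp, one_div]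
    exact hu.2.2.1
  have h10 : ‖(p : ℚ_[p]) * u.1 0 1‖ ≤ (p : ℝ)⁻¹ := by
    rw [norm_mul, Padic.norm_p]
    exact mul_le_of_le_one_right (inv_nonneg.mpr hp.le) (hu.1 0 1)
  refine ⟨?_, ?_, ?_, ?_, ?_⟩
  · simp only [PiMat_conj_val, Fin.forall_fin_two]
    exact ⟨⟨hu.1 1 1, h01⟩, h10.trans inv_prime_lt_one.le, hu.1 0 0⟩
  · rw [← GeneralLinearGroup.val_det_apply, hdet, GeneralLinearGroup.val_det_apply]
    exact hu.2.1
  · rw [PiMat_conj_val]; exact h10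
  · rw [PiMat_conj_val]; exact hu.2.2.2.2
  · rw [PiMat_conj_val]; exact hu.2.2.2.1

end InI1

lemma inI1_of_inKn_one {u : GL (Fin 2) ℚ_[p]} (hu : InKn p 1 u) : InI1 p u := by
  have h : ∀ i j, ‖u.1 i j - (1 : Matrix (Fin 2) (Fin 2) ℚ_[p]) i j‖ ≤ (p : ℝ)⁻¹ := fun i j =>
    (hu i j).trans_eq (by simp)
  have h00 := h 0 0; have h01 := h 0 1; have h10 := h 1 0; have h11 := h 1 1
  simp only [one_apply_eq, one_apply_ne, ne_eq, zero_ne_one, one_ne_zero, not_false_eq_true,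
    sub_zero] at h00 h01 h10 h11
  have hle : (p : ℝ)⁻¹ ≤ 1 := inv_prime_lt_one.le
  refine ⟨?_, ?_, h10, h00, h11⟩
  · intro i j
    fin_cases i <;> fin_cases j
    · exact (Padic.norm_eq_one_of_norm_sub_one_lt_one (h00.trans_lt inv_prime_lt_one)).le
    · exact h01.trans hle
    · exact h10.trans hle
    · exact (Padic.norm_eq_one_of_norm_sub_one_lt_one (h11.trans_lt inv_prime_lt_one)).le
  · exact Padic.norm_eq_one_of_norm_sub_one_lt_one <| norm_det_sub_one_lt_one_of_entries
      (h00.trans_lt inv_prime_lt_one) (h11.trans_lt inv_prime_lt_one) (h01.trans hle)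
      (h10.trans_lt inv_prime_lt_one)

lemma inI1_lowerUnipotent {t : ℚ_[p]} (ht : ‖t‖ ≤ (p : ℝ)⁻¹) : InI1 p (lowerUnipotent t) := by
  refine ⟨?_, by simp [lowerUnipotent], by simpa [lowerUnipotent], by simp [lowerUnipotent],
    by simp [lowerUnipotent]⟩
  simp [lowerUnipotent, Fin.forall_fin_two, ht.trans inv_prime_lt_one.le]

lemma inI1_upperUnipotent {t : ℚ_[p]} (ht : ‖t‖ ≤ 1) : InI1 p (upperUnipotent t) := by
  refine ⟨?_, by simp [upperUnipotent], by simp [upperUnipotent], by simp [upperUnipotent],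
    by simp [upperUnipotent]⟩
  simp [upperUnipotent, Fin.forall_fin_two, ht]

/-! ### The decomposition `G = P I₁ ∪ P Π I₁` -/

/-- `g ∈ P I₁`; the complement of `P I₁` in `G` is `P Π I₁`. -/
def InPI1 (g : GL (Fin 2) ℚ_[p]) : Prop := ‖g.1 1 0‖ < ‖g.1 1 1‖

lemma InPI1.one_one_ne_zero {g : GL (Fin 2) ℚ_[p]} (hg : InPI1 g) : g.1 1 1 ≠ 0 :=
  norm_pos_iff.mp ((norm_nonneg _).trans_lt hg)

lemma one_zero_ne_zero_of_not_inPI1 {g : GL (Fin 2) ℚ_[p]} (hg : ¬ InPI1 g) : g.1 1 0 ≠ 0 := by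
  intro h
  have hdet := (GeneralLinearGroup.det g).ne_zero
  rw [GeneralLinearGroup.val_det_fin_two, h, mul_zero, sub_zero] at hdet
  exact hg (by rw [InPI1, h, norm_zero]; exact norm_pos_iff.mpr (right_ne_zero_of_mul hdet))

lemma InPI1.exists_eq_mul {g : GL (Fin 2) ℚ_[p]} (hg : InPI1 g) :
    ∃ b u : GL (Fin 2) ℚ_[p], b.1 1 0 = 0 ∧ InI1 p u ∧ g = b * u := by
  set t := g.1 1 0 / g.1 1 1
  have ht : ‖t‖ ≤ (p : ℝ)⁻¹ := Padic.norm_le_inv_of_norm_lt_one <| by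
    rwa [norm_div, div_lt_one (norm_pos_iff.mpr hg.one_one_ne_zero)]
  refine ⟨g * (lowerUnipotent t)⁻¹, lowerUnipotent t, ?_, inI1_lowerUnipotent ht, by group⟩
  rw [GeneralLinearGroup.val_mul_apply_fin_two]
  change g.1 1 0 * 1 + g.1 1 1 * -t = 0
  rw [mul_neg, mul_div_cancel₀ _ hg.one_one_ne_zero, mul_one, add_neg_cancel]

lemma exists_eq_mul_PiMat_mul_of_not_inPI1 {g : GL (Fin 2) ℚ_[p]} (hg : ¬ InPI1 g) :
    ∃ b u : GL (Fin 2) ℚ_[p], b.1 1 0 = 0 ∧ InI1 p u ∧ g = b * PiMat p * u := by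
  set t := g.1 1 1 / g.1 1 0
  have ht : ‖t‖ ≤ 1 := by
    rw [norm_div, div_le_one (norm_pos_iff.mpr (one_zero_ne_zero_of_not_inPI1 hg))]
    exact not_lt.mp hg
  refine ⟨g * (upperUnipotent t)⁻¹ * (PiMat p)⁻¹, upperUnipotent t, ?_,
    inI1_upperUnipotent ht, by group⟩
  rw [GeneralLinearGroup.val_mul_apply_fin_two, GeneralLinearGroup.val_mul_apply_fin_two,
    GeneralLinearGroup.val_mul_apply_fin_two, PiMat_inv_val]
  change _ * 0 + (g.1 1 0 * -t + g.1 1 1 * 1) * 1 = 0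
  rw [mul_neg, mul_div_cancel₀ _ (one_zero_ne_zero_of_not_inPI1 hg)]
  ring

lemma inPI1_mul_iff_of_one_zero_eq_zero {b : GL (Fin 2) ℚ_[p]} (hb : b.1 1 0 = 0)
    (g : GL (Fin 2) ℚ_[p]) : InPI1 (b * g) ↔ InPI1 g := by
  rw [InPI1, InPI1, GeneralLinearGroup.val_mul_apply_one_of_one_zero_eq_zero hb,
    GeneralLinearGroup.val_mul_apply_one_of_one_zero_eq_zero hb, norm_mul, norm_mul]
  exact mul_lt_mul_iff_right₀
    (norm_pos_iff.mpr (GeneralLinearGroup.diag_ne_zero_of_one_zero_eq_zero hb).2)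

section RightI1

variable {g u : GL (Fin 2) ℚ_[p]}

lemma InPI1.norm_mul_one_one_sub_lt (hg : InPI1 g) (hu : InI1 p u) :
    ‖(g * u).1 1 1 - g.1 1 1‖ < ‖g.1 1 1‖ := by
  have hd : 0 < ‖g.1 1 1‖ := norm_pos_iff.mpr hg.one_one_ne_zero
  calc ‖(g * u).1 1 1 - g.1 1 1‖ = ‖g.1 1 0 * u.1 0 1 + g.1 1 1 * (u.1 1 1 - 1)‖ := by
        rw [GeneralLinearGroup.val_mul_apply_fin_two]; ring_nf
    _ ≤ max ‖g.1 1 0 * u.1 0 1‖ ‖g.1 1 1 * (u.1 1 1 - 1)‖ :=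
        IsUltrametricDist.norm_add_le_max _ _
    _ < ‖g.1 1 1‖ := by
      rw [norm_mul, norm_mul]
      refine max_lt ((mul_le_of_le_one_right (norm_nonneg _) (hu.norm_le_one 0 1)).trans_lt hg) ?_
      exact mul_lt_of_lt_one_right hd hu.norm_one_one_sub_one_lt_one

lemma InPI1.mul_inI1 (hg : InPI1 g) (hu : InI1 p u) : InPI1 (g * u) := by
  have hd : 0 < ‖g.1 1 1‖ := norm_pos_iff.mpr hg.one_one_ne_zero
  rw [InPI1, Padic.norm_eq_of_norm_sub_lt_right (hg.norm_mul_one_one_sub_lt hu),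
    GeneralLinearGroup.val_mul_apply_fin_two]
  refine (IsUltrametricDist.norm_add_le_max _ _).trans_lt (max_lt ?_ ?_)
  · rwa [norm_mul, hu.norm_zero_zero, mul_one]
  · rw [norm_mul]
    exact mul_lt_of_lt_one_right hd hu.norm_one_zero_lt_one

lemma not_inPI1_mul_inI1 (hg : ¬ InPI1 g) (hu : InI1 p u) : ¬ InPI1 (g * u) := by
  have hc : 0 < ‖g.1 1 0‖ := norm_pos_iff.mpr (one_zero_ne_zero_of_not_inPI1 hg)
  have hdc : ‖g.1 1 1‖ ≤ ‖g.1 1 0‖ := not_lt.mp hg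
  have hc' : ‖(g * u).1 1 0‖ = ‖g.1 1 0‖ := by
    rw [← mul_one ‖g.1 1 0‖, ← hu.norm_zero_zero, ← norm_mul]
    refine Padic.norm_eq_of_norm_sub_lt_right ?_
    rw [GeneralLinearGroup.val_mul_apply_fin_two, add_sub_cancel_left, norm_mul, norm_mul,
      hu.norm_zero_zero, mul_one]
    exact (mul_le_mul_of_nonneg_right hdc (norm_nonneg _)).trans_lt
      (mul_lt_of_lt_one_right hc hu.norm_one_zero_lt_one)
  rw [InPI1, hc', not_lt, GeneralLinearGroup.val_mul_apply_fin_two]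
  refine (IsUltrametricDist.norm_add_le_max _ _).trans (max_le ?_ ?_)
  · rw [norm_mul]; exact mul_le_of_le_one_right hc.le (hu.norm_le_one 0 1)
  · rwa [norm_mul, hu.norm_one_one, mul_one]

end RightI1

/-! ### `I₁`-invariant vectors of the principal series -/

section Functions

variable {k : Type*} [Field k] (χ₁ χ₂ : ℚ_[p]ˣ →* kˣ)

def IsPEquivariant (f : GL (Fin 2) ℚ_[p] → k) : Prop :=
  ∀ b g : GL (Fin 2) ℚ_[p], b.1 1 0 = 0 → ∀ a d : ℚ_[p]ˣ, b.1 0 0 = a → b.1 1 1 = d →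
    f (b * g) = (χ₁ a : k) * (χ₂ d : k) * f g

def IsI1Invariant (f : GL (Fin 2) ℚ_[p] → k) : Prop :=
  ∀ g u, InI1 p u → f (g * u) = f g

/-- The vector supported on `P I₁` with `b u ↦ χ(b)`: here `b` has diagonal
`(det g / g₁₁, g₁₁)`. -/
noncomputable def pI1Fun (g : GL (Fin 2) ℚ_[p]) : k :=
  open Classical in
  if hg : InPI1 g then
    (χ₁ (GeneralLinearGroup.det g / Units.mk0 _ hg.one_one_ne_zero) *
      χ₂ (Units.mk0 _ hg.one_one_ne_zero) : kˣ)
  else 0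

variable {χ₁ χ₂}

lemma IsPEquivariant.apply_mul_eq_of_apply_eq {f f' : GL (Fin 2) ℚ_[p] → k}
    (hf : IsPEquivariant χ₁ χ₂ f) (hf' : IsPEquivariant χ₁ χ₂ f') {b : GL (Fin 2) ℚ_[p]}
    (hb : b.1 1 0 = 0) {x : GL (Fin 2) ℚ_[p]} (hx : f x = f' x) : f (b * x) = f' (b * x) := by
  obtain ⟨ha, hd⟩ := GeneralLinearGroup.diag_ne_zero_of_one_zero_eq_zero hb
  rw [hf b x hb (Units.mk0 _ ha) (Units.mk0 _ hd) rfl rfl,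
    hf' b x hb (Units.mk0 _ ha) (Units.mk0 _ hd) rfl rfl, hx]

theorem eq_of_apply_one_eq_of_apply_PiMat_eq {f f' : GL (Fin 2) ℚ_[p] → k}
    (hf : IsPEquivariant χ₁ χ₂ f) (hf' : IsPEquivariant χ₁ χ₂ f')
    (hfI : IsI1Invariant f) (hf'I : IsI1Invariant f')
    (h1 : f 1 = f' 1) (hPi : f (PiMat p) = f' (PiMat p)) : f = f' := by
  funext g
  by_cases hg : InPI1 g
  · obtain ⟨b, u, hb, hu, rfl⟩ := hg.exists_eq_mul
    rw [hfI _ _ hu, hf'I _ _ hu, ← mul_one b]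
    exact hf.apply_mul_eq_of_apply_eq hf' hb h1
  · obtain ⟨b, u, hb, hu, rfl⟩ := exists_eq_mul_PiMat_mul_of_not_inPI1 hg
    rw [hfI _ _ hu, hf'I _ _ hu]
    exact hf.apply_mul_eq_of_apply_eq hf' hb hPi

lemma pI1Fun_of_inPI1 {g : GL (Fin 2) ℚ_[p]} (hg : InPI1 g) :
    pI1Fun χ₁ χ₂ g = (χ₁ (GeneralLinearGroup.det g / Units.mk0 _ hg.one_one_ne_zero) *
      χ₂ (Units.mk0 _ hg.one_one_ne_zero) : kˣ) :=
  dif_pos hg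

lemma pI1Fun_of_not_inPI1 {g : GL (Fin 2) ℚ_[p]} (hg : ¬ InPI1 g) : pI1Fun χ₁ χ₂ g = 0 :=
  dif_neg hg

lemma pI1Fun_one : pI1Fun χ₁ χ₂ (1 : GL (Fin 2) ℚ_[p]) = 1 := by
  have h : InPI1 (1 : GL (Fin 2) ℚ_[p]) := by simp [InPI1]
  rw [pI1Fun_of_inPI1 h, show Units.mk0 _ h.one_one_ne_zero = 1 from Units.ext (by simp)]
  simp

lemma pI1Fun_PiMat : pI1Fun χ₁ χ₂ (PiMat p) = 0 :=
  pI1Fun_of_not_inPI1 (by simp [InPI1, PiMat_val])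

lemma pI1Fun_PiMat_inv : pI1Fun χ₁ χ₂ (PiMat p)⁻¹ = 0 :=
  pI1Fun_of_not_inPI1 (by rw [InPI1, PiMat_inv_val]; simp)

lemma isPEquivariant_pI1Fun : IsPEquivariant χ₁ χ₂ (pI1Fun χ₁ χ₂) := by
  intro b g hb a d ha hd
  by_cases hg : InPI1 g
  · have hbg := (inPI1_mul_iff_of_one_zero_eq_zero hb g).mpr hg
    have h11 : Units.mk0 _ hbg.one_one_ne_zero = d * Units.mk0 _ hg.one_one_ne_zero :=
      Units.ext (by simp [GeneralLinearGroup.val_mul_apply_one_of_one_zero_eq_zero hb, hd])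
    have hdet : GeneralLinearGroup.det (b * g) = a * d * GeneralLinearGroup.det g := by
      rw [map_mul]
      congr 1
      exact Units.ext (by rw [Units.val_mul, GeneralLinearGroup.val_det_fin_two, hb, ha, hd]; ring)
    rw [pI1Fun_of_inPI1 hbg, pI1Fun_of_inPI1 hg, h11, hdet]
    simp only [map_mul, map_div, Units.val_mul, Units.val_div_eq_div_val]
    field_simp
  · rw [pI1Fun_of_not_inPI1 hg,
      pI1Fun_of_not_inPI1 (by rwa [inPI1_mul_iff_of_one_zero_eq_zero hb]), mul_zero]

lemma isI1Invariant_pI1Fun (h₁ : IsTrivialOnPrincipalUnits χ₁)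
    (h₂ : IsTrivialOnPrincipalUnits χ₂) : IsI1Invariant (pI1Fun χ₁ χ₂) := by
  intro g u hu
  by_cases hg : InPI1 g
  · have hgu := hg.mul_inI1 hu
    have h11 : ∀ χ : ℚ_[p]ˣ →* kˣ, IsTrivialOnPrincipalUnits χ →
        χ (Units.mk0 _ hgu.one_one_ne_zero) = χ (Units.mk0 _ hg.one_one_ne_zero) :=
      fun χ hχ => hχ.map_eq_of_norm_sub_lt (hg.norm_mul_one_one_sub_lt hu)
    rw [pI1Fun_of_inPI1 hgu, pI1Fun_of_inPI1 hg, map_div, map_div, map_mul, map_mul,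
      h₁ _ hu.norm_det_sub_one_lt_one, mul_one, h11 χ₁ h₁, h11 χ₂ h₂]
  · rw [pI1Fun_of_not_inPI1 hg, pI1Fun_of_not_inPI1 (not_inPI1_mul_inI1 hg hu)]

lemma isIndChi_of_isI1Invariant {f : GL (Fin 2) ℚ_[p] → k} (hf : IsPEquivariant χ₁ χ₂ f)
    (hfI : IsI1Invariant f) : IsIndChi p χ₁ χ₂ f :=
  ⟨hf, 1, le_rfl, fun g _ hu => hfI g _ (inI1_of_inKn_one hu)⟩

theorem exists_isIndChi_isI1Invariant (h₁ : IsTrivialOnPrincipalUnits χ₁)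
    (h₂ : IsTrivialOnPrincipalUnits χ₂) (x y : k) :
    ∃ f, IsIndChi p χ₁ χ₂ f ∧ IsI1Invariant f ∧ f 1 = x ∧ f (PiMat p) = y := by
  have hφ := isPEquivariant_pI1Fun (χ₁ := χ₁) (χ₂ := χ₂)
  have hφI := isI1Invariant_pI1Fun h₁ h₂
  let f g := x * pI1Fun χ₁ χ₂ g + y * pI1Fun χ₁ χ₂ (g * (PiMat p)⁻¹)
  have hfI : IsI1Invariant f := by
    intro g u hu
    have hconj : g * u * (PiMat p)⁻¹ = g * (PiMat p)⁻¹ * (PiMat p * u * (PiMat p)⁻¹) := by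
      group
    simp only [f, hφI g u hu, hconj, hφI _ _ hu.conj_PiMat]
  refine ⟨f, isIndChi_of_isI1Invariant ?_ hfI, hfI, ?_, ?_⟩
  · intro b g hb a d ha hd
    simp only [f, mul_assoc b g, hφ b g hb a d ha hd, hφ b _ hb a d ha hd]
    ring
  · simp [f, pI1Fun_one, pI1Fun_PiMat_inv]
  · simp [f, pI1Fun_one, pI1Fun_PiMat]

end Functions

/-- stated in §2.1 of the paper.  The evaluation map
`f ↦ (f(1), f(Π))` is a (`k`-linear) bijection from the space of
`I₁`-invariant vectors of the principal series `Ind_P^G χ` onto `k × k`;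
in particular the `I₁`-invariants form a 2-dimensional `k`-vector space. -/
theorem statement_3 (p : ℕ) [Fact p.Prime] (k : Type*) [Field k] [CharP k p]
    (χ₁ χ₂ : ℚ_[p]ˣ →* kˣ)
    (hχ₁ : ∃ N : ℕ, 1 ≤ N ∧
      ∀ u : ℚ_[p]ˣ, ‖(u : ℚ_[p]) - 1‖ ≤ (p : ℝ) ^ (-(N : ℤ)) → χ₁ u = 1)
    (hχ₂ : ∃ N : ℕ, 1 ≤ N ∧
      ∀ u : ℚ_[p]ˣ, ‖(u : ℚ_[p]) - 1‖ ≤ (p : ℝ) ^ (-(N : ℤ)) → χ₂ u = 1) :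
    Function.Bijective
      (fun f : {f : GL (Fin 2) ℚ_[p] → k //
          IsIndChi p χ₁ χ₂ f ∧ ∀ g u, InI1 p u → f (g * u) = f g} =>
        ((f.1 1, f.1 (PiMat p)) : k × k)) := by
  obtain ⟨N₁, -, hN₁⟩ := hχ₁
  obtain ⟨N₂, -, hN₂⟩ := hχ₂
  have h₁ := isTrivialOnPrincipalUnits_of_forall_norm_sub_one_le χ₁ N₁ hN₁
  have h₂ := isTrivialOnPrincipalUnits_of_forall_norm_sub_one_le χ₂ N₂ hN₂
  refine ⟨fun f f' hff' => Subtype.ext ?_, fun ⟨x, y⟩ => ?_⟩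
  · exact eq_of_apply_one_eq_of_apply_PiMat_eq f.2.1.1 f'.2.1.1 f.2.2 f'.2.2
      (congrArg Prod.fst hff') (congrArg Prod.snd hff')
  · obtain ⟨f, hf, hfI, h1, hPi⟩ := exists_isIndChi_isI1Invariant h₁ h₂ x y
    exact ⟨⟨f, hf, hfI⟩, Prod.ext h1 hPi⟩
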